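/- For every F ∈ GL⁺(2), the squared Euclidean (Frobenius) distance of the isochoric part F/(det F)^{1/2} to SO(2) satisfies inf_{R ∈ SO(2)} ‖F/(det F)^{1/2} − R‖² = (√(‖F‖²/det F + 2) − 1)² − 1, and the function W : GL⁺(2) → ℝ defined by W(F) = (√(‖F‖²/det F + 2) − 1)² − 1 is polyconvex on GL⁺(2). -/

import Mathlib

open Matrix Set

noncomputable section

/-- The space of real 2×2 matrices. -/
abbrev Mat2 : Type := Matrix (Fin 2) (Fin 2) ℝ

/-- The special orthogonal group SO(2): orthogonal 2×2 matrices with determinant 1. -/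
def SO2 : Set Mat2 := {Q : Mat2 | Qᵀ * Q = 1 ∧ Q.det = 1}

/-- A function `W` (viewed on GL⁺(2) = {F | 0 < det F}) is polyconvex if there is a
convex function `P : ℝ^{2×2} × ℝ → ℝ ∪ {+∞}` with `W F = P (F, det F)` on GL⁺(2). -/
def Polyconvex (W : Mat2 → ℝ) : Prop :=
  ∃ P : Mat2 × ℝ → EReal,
    (∀ x y : Mat2 × ℝ, ∀ a b : ℝ, 0 ≤ a → 0 ≤ b → a + b = 1 →
      P (a • x + b • y) ≤ (a : EReal) * P x + (b : EReal) * P y) ∧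
    (∀ F : Mat2, 0 < F.det → (W F : EReal) = P (F, F.det))

/-- Rank-one convexity of `W` on GL⁺(2): convexity along rank-one line segments
lying in GL⁺(2). -/
def RankOneConvex (W : Mat2 → ℝ) : Prop :=
  ∀ F : Mat2, 0 < F.det → ∀ ξ η : Fin 2 → ℝ, ∀ θ : ℝ, θ ∈ Set.Icc (0:ℝ) 1 →
    (∀ t ∈ Set.Icc (0:ℝ) 1, 0 < (F + t • vecMulVec ξ η).det) →
    W (F + (1 - θ) • vecMulVec ξ η) ≤ θ * W F + (1 - θ) * W (F + vecMulVec ξ η)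

/-- Objectivity and isotropy: bi-SO(2)-invariance on GL⁺(2). -/
def ObjectiveIsotropic (W : Mat2 → ℝ) : Prop :=
  ∀ F : Mat2, 0 < F.det → ∀ Q₁ Q₂ : Mat2, Q₁ ∈ SO2 → Q₂ ∈ SO2 →
    W (Q₁ * F * Q₂) = W F

/-- Isochoric: invariance under positive scaling on GL⁺(2). -/
def Isochoric (W : Mat2 → ℝ) : Prop :=
  ∀ F : Mat2, 0 < F.det → ∀ a : ℝ, 0 < a → W (a • F) = W F

/-- The 2×2 diagonal matrix diag(a, b). -/
def diag2 (a b : ℝ) : Mat2 := !![a, 0; 0, b]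

/-- The squared Frobenius norm of a 2×2 matrix. -/
def frobSq (F : Mat2) : ℝ := ∑ i, ∑ j, (F i j) ^ 2

/-- The operator norm of `F` induced by the Euclidean norm on ℝ²:
the supremum of ‖F·x‖ over Euclidean-unit vectors x. -/
def opNorm2 (F : Mat2) : ℝ :=
  sSup {r : ℝ | ∃ x : Fin 2 → ℝ, (x 0) ^ 2 + (x 1) ^ 2 = 1 ∧
    r = Real.sqrt ((F.mulVec x 0) ^ 2 + (F.mulVec x 1) ^ 2)}

/-!
Write `c(F) = (F₀₀ + F₁₁) + i (F₁₀ - F₀₁) ∈ ℂ`, so that the conformal part of `F` is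
multiplication by `c(F) / 2`, and note `|c(F)|² = ‖F‖² + 2 det F`. A rotation is a unit complex
number `ζ`, and `‖F - ζ‖² = ‖F‖² + 2 - 2 Re(c(F) ζ̄)`, minimised at `ζ = c(F) / |c(F)|` with value
`‖F‖² + 2 - 2 |c(F)|`. For `det F = 1` this is `(|c(F)| - 1)² - 1` with `|c(F)| = √(‖F‖² + 2)`.

On `GL⁺(2)` the energy is `(|c(F)| - √δ)² / δ - 1` with `δ = det F`. Here `|c(F)|` is a norm of a
linear function of `F`, `√δ` is concave, and `(u, δ) ↦ u² / δ` is jointly convex and increasing in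
`u ≥ 0`; truncating `|c(F)| - √δ` below at `0` (inactive on `GL⁺(2)`) and setting the value `+∞`
for `δ ≤ 0` yields a convex function of `(F, δ)`.
-/

lemma add_sq_div_add_le {a b u₁ u₂ d₁ d₂ : ℝ} (ha : 0 ≤ a) (hb : 0 ≤ b) (hd₁ : 0 < d₁)
    (hd₂ : 0 < d₂) (hd : 0 < a * d₁ + b * d₂) :
    (a * u₁ + b * u₂) ^ 2 / (a * d₁ + b * d₂) ≤ a * (u₁ ^ 2 / d₁) + b * (u₂ ^ 2 / d₂) := by
  rw [div_le_iff₀ hd, ← sub_nonneg]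
  have key : (a * (u₁ ^ 2 / d₁) + b * (u₂ ^ 2 / d₂)) * (a * d₁ + b * d₂) - (a * u₁ + b * u₂) ^ 2 =
      a * b * (u₁ * d₂ - u₂ * d₁) ^ 2 / (d₁ * d₂) := by
    field_simp
    ring
  rw [key]
  positivity

section

variable {E : Type*}

theorem ConvexOn.sq_div [AddCommGroup E] [Module ℝ E] {s : Set E} {g d : E → ℝ}
    (hg : ConvexOn ℝ s g) (hg₀ : ∀ x ∈ s, 0 ≤ g x) (hd : ConcaveOn ℝ s d)
    (hd₀ : ∀ x ∈ s, 0 < d x) : ConvexOn ℝ s (fun x => g x ^ 2 / d x) := by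
  refine ⟨hg.1, fun x hx y hy a b ha hb hab => ?_⟩
  have hz := hg.1 hx hy ha hb hab
  have hpos : 0 < a * d x + b * d y := by
    rcases ha.eq_or_lt with rfl | ha
    · rw [zero_add] at hab
      simp [hab, hd₀ y hy]
    · have := hd₀ x hx
      have := hd₀ y hy
      positivity
  simp only [smul_eq_mul]
  calc g (a • x + b • y) ^ 2 / d (a • x + b • y)
      ≤ (a * g x + b * g y) ^ 2 / (a * d x + b * d y) := by
        have := hg₀ _ hz
        gcongr
        · exact hg.2 hx hy ha hb hab
        · exact hd.2 hx hy ha hb hab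
    _ ≤ a * (g x ^ 2 / d x) + b * (g y ^ 2 / d y) :=
        add_sq_div_add_le ha hb (hd₀ x hx) (hd₀ y hy) hpos

open Classical in
def extendByTop (s : Set E) (f : E → ℝ) (x : E) : EReal := if x ∈ s then f x else ⊤

lemma extendByTop_of_mem {s : Set E} {f : E → ℝ} {x : E} (hx : x ∈ s) :
    extendByTop s f x = f x := if_pos hx

lemma extendByTop_of_not_mem {s : Set E} {f : E → ℝ} {x : E} (hx : x ∉ s) :
    extendByTop s f x = ⊤ := if_neg hx

lemma coe_mul_extendByTop_ne_bot (s : Set E) (f : E → ℝ) (x : E) {a : ℝ}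
    (ha : 0 ≤ a) : (a : EReal) * extendByTop s f x ≠ ⊥ := by
  refine (EReal.mul_ne_bot _ _).2
    ⟨Or.inl (EReal.coe_ne_bot a), Or.inr ?_, Or.inl (EReal.coe_ne_top a),
      Or.inl (EReal.coe_nonneg.2 ha)⟩
  by_cases hx : x ∈ s
  · rw [extendByTop_of_mem hx]
    exact EReal.coe_ne_bot _
  · rw [extendByTop_of_not_mem hx]
    exact top_ne_bot

lemma ConvexOn.extendByTop_le [AddCommGroup E] [Module ℝ E] {s : Set E}
    {f : E → ℝ} (hf : ConvexOn ℝ s f) {x y : E} {a b : ℝ} (ha : 0 ≤ a) (hb : 0 ≤ b)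
    (hab : a + b = 1) :
    extendByTop s f (a • x + b • y) ≤ a * extendByTop s f x + b * extendByTop s f y := by
  by_cases hx : x ∈ s
  · by_cases hy : y ∈ s
    · rw [extendByTop_of_mem hx, extendByTop_of_mem hy, extendByTop_of_mem (hf.1 hx hy ha hb hab)]
      exact_mod_cast hf.2 hx hy ha hb hab
    rcases hb.eq_or_lt with rfl | hb
    · obtain rfl : a = 1 := by linarith
      simp
    rw [extendByTop_of_not_mem hy, EReal.coe_mul_top_of_pos hb,
      EReal.add_top_of_ne_bot (coe_mul_extendByTop_ne_bot s f x ha)]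
    exact le_top
  rcases ha.eq_or_lt with rfl | ha
  · obtain rfl : b = 1 := by linarith
    simp
  rw [extendByTop_of_not_mem hx, EReal.coe_mul_top_of_pos ha,
    EReal.top_add_of_ne_bot (coe_mul_extendByTop_ne_bot s f y hb)]
  exact le_top

end

lemma unit_mul_re_add_mul_im_le_norm (w : ℂ) {p q : ℝ} (hpq : p ^ 2 + q ^ 2 = 1) :
    p * w.re + q * w.im ≤ ‖w‖ := by
  rw [Complex.norm_def, Complex.normSq_apply]
  exact (le_abs_self _).trans <| Real.abs_le_sqrt <| by nlinarith [sq_nonneg (p * w.im - q * w.re)]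

lemma cos_arg_mul_re_add_sin_arg_mul_im (w : ℂ) :
    Real.cos w.arg * w.re + Real.sin w.arg * w.im = ‖w‖ := by
  rw [← Complex.norm_mul_cos_arg w, ← Complex.norm_mul_sin_arg w]
  linear_combination ‖w‖ * Real.sin_sq_add_cos_sq w.arg

lemma frobSq_nonneg (F : Mat2) : 0 ≤ frobSq F := by
  unfold frobSq; positivity

lemma frobSq_smul (c : ℝ) (F : Mat2) : frobSq (c • F) = c ^ 2 * frobSq F := by
  simp only [frobSq, Matrix.smul_apply, smul_eq_mul, mul_pow, Finset.mul_sum]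

def conformalCoord : Mat2 →ₗ[ℝ] ℂ where
  toFun F := ⟨F 0 0 + F 1 1, F 1 0 - F 0 1⟩
  map_add' F G := by
    apply Complex.ext <;> simp only [Matrix.add_apply, Complex.add_re, Complex.add_im] <;> ring
  map_smul' c F := by
    apply Complex.ext <;>
      simp only [Matrix.smul_apply, smul_eq_mul, RingHom.id_apply, Complex.real_smul,
        Complex.mul_re, Complex.mul_im, Complex.ofReal_re, Complex.ofReal_im] <;> ring

def conformalNorm (F : Mat2) : ℝ := ‖conformalCoord F‖

lemma conformalNorm_nonneg (F : Mat2) : 0 ≤ conformalNorm F := norm_nonneg _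

lemma conformalNorm_sq (F : Mat2) : conformalNorm F ^ 2 = frobSq F + 2 * F.det := by
  rw [conformalNorm, Complex.sq_norm, Complex.normSq_apply, frobSq, det_fin_two]
  simp only [conformalCoord, LinearMap.coe_mk, AddHom.coe_mk, Fin.sum_univ_two]
  ring

lemma convexOn_conformalNorm : ConvexOn ℝ univ conformalNorm :=
  (convexOn_norm convex_univ).comp_linearMap conformalCoord

lemma mem_SO2_iff {R : Mat2} : R ∈ SO2 ↔ ∃ p q : ℝ, p ^ 2 + q ^ 2 = 1 ∧ R = !![p, -q; q, p] := by
  constructor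
  · rintro ⟨horth, hdet⟩
    have e00 := congr_fun (congr_fun horth 0) 0
    have e01 := congr_fun (congr_fun horth 0) 1
    simp only [mul_apply, transpose_apply, Fin.sum_univ_two, one_apply_eq,
      one_apply_ne zero_ne_one] at e00 e01
    rw [det_fin_two] at hdet
    have h01 : R 0 1 = -R 1 0 := by linear_combination -(R 0 1) * e00 - R 1 0 * hdet + R 0 0 * e01
    have h11 : R 1 1 = R 0 0 := by linear_combination -(R 1 1) * e00 + R 0 0 * hdet + R 1 0 * e01
    refine ⟨R 0 0, R 1 0, by linear_combination e00, ?_⟩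
    conv_lhs => rw [eta_fin_two R]
    rw [h01, h11]
  · rintro ⟨p, q, hpq, rfl⟩
    constructor
    · ext i j
      fin_cases i <;> fin_cases j <;>
        simp [mul_apply, Fin.sum_univ_two] <;> linarith
    · rw [det_fin_two_of]
      linear_combination hpq

lemma frobSq_sub_rotation (A : Mat2) {p q : ℝ} (hpq : p ^ 2 + q ^ 2 = 1) :
    frobSq (A - !![p, -q; q, p]) =
      frobSq A + 2 - 2 * (p * (conformalCoord A).re + q * (conformalCoord A).im) := by
  simp only [frobSq, Fin.sum_univ_two, Matrix.sub_apply, of_apply, cons_val', cons_val_zero,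
    cons_val_one, empty_val', cons_val_fin_one, conformalCoord, LinearMap.coe_mk, AddHom.coe_mk]
  linear_combination 2 * hpq

lemma isLeast_frobSq_sub_SO2 (A : Mat2) :
    IsLeast {d : ℝ | ∃ R ∈ SO2, d = frobSq (A - R)} (frobSq A + 2 - 2 * conformalNorm A) := by
  constructor
  · refine ⟨!![Real.cos (conformalCoord A).arg, -Real.sin (conformalCoord A).arg;
      Real.sin (conformalCoord A).arg, Real.cos (conformalCoord A).arg],
      mem_SO2_iff.2 ⟨_, _, Real.cos_sq_add_sin_sq _, rfl⟩, ?_⟩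
    rw [frobSq_sub_rotation A (Real.cos_sq_add_sin_sq _), cos_arg_mul_re_add_sin_arg_mul_im,
      conformalNorm]
  · rintro d ⟨R, hR, rfl⟩
    obtain ⟨p, q, hpq, rfl⟩ := mem_SO2_iff.1 hR
    rw [frobSq_sub_rotation A hpq, conformalNorm]
    linarith [unit_mul_re_add_mul_im_le_norm (conformalCoord A) hpq]

lemma sInf_frobSq_isochoric_sub_SO2 (F : Mat2) (hF : 0 < F.det) :
    sInf {d : ℝ | ∃ R ∈ SO2, d = frobSq ((Real.sqrt F.det)⁻¹ • F - R)} =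
      (Real.sqrt (frobSq F / F.det + 2) - 1) ^ 2 - 1 := by
  set A := (Real.sqrt F.det)⁻¹ • F
  have hsq : Real.sqrt F.det ^ 2 = F.det := Real.sq_sqrt hF.le
  have hdet : A.det = 1 := by
    rw [det_smul, Fintype.card_fin, inv_pow, hsq, inv_mul_cancel₀ hF.ne']
  have hfrob : frobSq A = frobSq F / F.det := by
    rw [frobSq_smul, inv_pow, hsq, inv_mul_eq_div]
  have hnorm : conformalNorm A = Real.sqrt (frobSq A + 2) := by
    have hsq_norm := conformalNorm_sq A
    rw [hdet, mul_one] at hsq_norm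
    rw [← hsq_norm, Real.sqrt_sq (conformalNorm_nonneg A)]
  rw [(isLeast_frobSq_sub_SO2 A).csInf_eq, hnorm, ← hfrob]
  linear_combination -Real.sq_sqrt (by linarith [frobSq_nonneg A] : 0 ≤ frobSq A + 2)

lemma polyconvex_of_convexOn {W : Mat2 → ℝ} {f : Mat2 × ℝ → ℝ}
    (hf : ConvexOn ℝ {z | 0 < z.2} f) (hW : ∀ F : Mat2, 0 < F.det → W F = f (F, F.det)) :
    Polyconvex W :=
  ⟨extendByTop _ f, fun _ _ _ _ ha hb hab => hf.extendByTop_le ha hb hab,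
    fun F hF => by
      rw [extendByTop_of_mem (show (F, F.det) ∈ {z : Mat2 × ℝ | 0 < z.2} from hF), hW F hF]⟩

def liftedEnergy (z : Mat2 × ℝ) : ℝ :=
  max (conformalNorm z.1 - Real.sqrt z.2) 0 ^ 2 / z.2 - 1

lemma convexOn_liftedEnergy : ConvexOn ℝ {z : Mat2 × ℝ | 0 < z.2} liftedEnergy := by
  have hs : Convex ℝ {z : Mat2 × ℝ | 0 < z.2} :=
    (convex_Ioi 0).linear_preimage (LinearMap.snd ℝ Mat2 ℝ)
  have hm := (convexOn_conformalNorm.comp_linearMap (LinearMap.fst ℝ Mat2 ℝ)).subset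
    (subset_univ _) hs
  have hsqrt :=
    (Real.strictConcaveOn_sqrt.concaveOn.comp_linearMap (LinearMap.snd ℝ Mat2 ℝ)).subset
      (fun _ hz => le_of_lt (show (0 : ℝ) < _ from hz)) hs
  have hg := (hm.sub hsqrt).sup (convexOn_const 0 hs)
  exact (hg.sq_div (fun _ _ => le_max_right _ _) ((LinearMap.snd ℝ Mat2 ℝ).concaveOn hs)
    (fun _ hz => hz)).add_const (-1)

lemma liftedEnergy_apply_det (F : Mat2) (hF : 0 < F.det) :
    liftedEnergy (F, F.det) = (Real.sqrt (frobSq F / F.det + 2) - 1) ^ 2 - 1 := by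
  set s := Real.sqrt (frobSq F / F.det + 2)
  have hs : 1 ≤ s := Real.one_le_sqrt.2 (by linarith [div_nonneg (frobSq_nonneg F) hF.le])
  have hm : conformalNorm F = s * Real.sqrt F.det := by
    rw [← Real.sqrt_mul (by linarith [div_nonneg (frobSq_nonneg F) hF.le]), add_mul,
      div_mul_cancel₀ _ hF.ne', ← conformalNorm_sq, Real.sqrt_sq (conformalNorm_nonneg F)]
  have hmax : max (conformalNorm F - Real.sqrt F.det) 0 = (s - 1) * Real.sqrt F.det := by
    rw [hm, max_eq_left (by nlinarith [Real.sqrt_nonneg F.det])]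
    ring
  rw [liftedEnergy, hmax, mul_pow, Real.sq_sqrt hF.le, mul_div_cancel_right₀ _ hF.ne']

/-- for `F ∈ GL⁺(2)`, the squared Frobenius distance of the isochoric
part `F/√(det F)` to SO(2) equals `(√(‖F‖²/det F + 2) − 1)² − 1`, and this defines a
polyconvex function on GL⁺(2). -/
theorem isochoric_distance_to_SO2_and_polyconvex :
    (∀ F : Mat2, 0 < F.det →
      sInf {d : ℝ | ∃ R ∈ SO2, d = frobSq ((Real.sqrt F.det)⁻¹ • F - R)} =
        (Real.sqrt (frobSq F / F.det + 2) - 1) ^ 2 - 1) ∧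
    Polyconvex (fun F => (Real.sqrt (frobSq F / F.det + 2) - 1) ^ 2 - 1) :=
  ⟨sInf_frobSq_isochoric_sub_SO2,
    polyconvex_of_convexOn convexOn_liftedEnergy fun F hF => (liftedEnergy_apply_det F hF).symm⟩
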